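/- The function K is continuous on ℝ₊^I, and K(n) ≤ 0 for every n ∈ ℝ₊^I, with strict inequality K(n) < 0 unless n is an invariant state. -/

import Mathlib

open Real Set

noncomputable section

/-- Feasible set for the bandwidth allocation problem at state `n`: the vector
`Λ⁺ = (Λ_i : i ∈ I₊(n))` is embedded in `ℝ^I` by requiring `L i = 0` whenever `n i = 0`. -/
def Feasible {I J : ℕ} (A : Fin J → Fin I → ℝ) (C : Fin J → ℝ)
    (n : Fin I → ℝ) : Set (Fin I → ℝ) :=
  {L | (∀ i, 0 ≤ L i) ∧ (∀ i, n i = 0 → L i = 0) ∧ ∀ j, ∑ i, A j i * L i ≤ C j}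

/-- The objective `G_n(Λ⁺)`, taking the value `⊥ = -∞` when `α ≥ 1` and some
coordinate of `Λ⁺` in `I₊(n)` vanishes. -/
def Gfun {I : ℕ} (α : ℝ) (κ : Fin I → ℝ) (n L : Fin I → ℝ) : EReal :=
  if 1 ≤ α ∧ ∃ i, 0 < n i ∧ L i = 0 then ⊥
  else if α = 1 then
    ((∑ i, if 0 < n i then κ i * n i * Real.log (L i) else 0 : ℝ) : EReal)
  else
    ((∑ i, if 0 < n i then κ i * n i ^ α * L i ^ (1 - α) / (1 - α) else 0 : ℝ) : EReal)

/-- `L` is an optimal weighted α-fair bandwidth allocation for the state `n`,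
i.e. a maximizer of `G_n` over the feasible set for `n` (with `L i = 0` for `i ∈ I₀(n)`). -/
def IsAlloc {I J : ℕ} (A : Fin J → Fin I → ℝ) (C : Fin J → ℝ) (α : ℝ)
    (κ : Fin I → ℝ) (n L : Fin I → ℝ) : Prop :=
  L ∈ Feasible A C n ∧ ∀ L' ∈ Feasible A C n, Gfun α κ n L' ≤ Gfun α κ n L

/-- `f` is absolutely continuous on `[0, T]` for every `T > 0` (ε-δ definition with
finitely many pairwise disjoint subintervals). -/
def AbsContNonneg (f : ℝ → ℝ) : Prop :=
  ∀ T > (0:ℝ), ∀ ε > (0:ℝ), ∃ δ > (0:ℝ), ∀ (m : ℕ) (a b : Fin m → ℝ),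
    (∀ k, 0 ≤ a k ∧ a k ≤ b k ∧ b k ≤ T) →
    (∀ k l, k < l → b k ≤ a l ∨ b l ≤ a k) →
    (∑ k, (b k - a k)) < δ → (∑ k, |f (b k) - f (a k)|) < ε

/-- Fluid model solution: `n : [0,∞) → ℝ₊^I` absolutely continuous, and at every
regular point `t` the derivative conditions (13) and capacity condition (14) hold. -/
def IsFluidSol {I J : ℕ} (A : Fin J → Fin I → ℝ) (C : Fin J → ℝ)
    (ν μ : Fin I → ℝ) (Λ : (Fin I → ℝ) → Fin I → ℝ)
    (n : ℝ → Fin I → ℝ) : Prop :=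
  (∀ i, AbsContNonneg fun t => n t i) ∧
  (∀ t ∈ Ici (0:ℝ), ∀ i, 0 ≤ n t i) ∧
  ∀ t ∈ Ici (0:ℝ),
    (∀ i, DifferentiableWithinAt ℝ (fun s => n s i) (Ici 0) t) →
    (∀ i, (0 < n t i →
        HasDerivWithinAt (fun s => n s i) (ν i - μ i * Λ (n t) i) (Ici 0) t) ∧
      (n t i = 0 → HasDerivWithinAt (fun s => n s i) 0 (Ici 0) t)) ∧
    ∀ j, (∑ i, A j i * (if 0 < n t i then Λ (n t) i else ν i / μ i)) ≤ C j

/-- The set `J*` of critically loaded resources. -/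
def Jstar {I J : ℕ} (A : Fin J → Fin I → ℝ) (C : Fin J → ℝ)
    (ν μ : Fin I → ℝ) : Set (Fin J) :=
  {j | ∑ i, A j i * (ν i / μ i) = C j}

/-- The workload map `w(n)`. -/
def wl {I J : ℕ} (A : Fin J → Fin I → ℝ) (μ : Fin I → ℝ)
    (n : Fin I → ℝ) : Fin J → ℝ :=
  fun j => ∑ i, A j i * n i / μ i

/-- Feasible set of the workload optimization problem (22) for workload `w`. -/
def WFeasible {I J : ℕ} (A : Fin J → Fin I → ℝ) (C : Fin J → ℝ)
    (ν μ : Fin I → ℝ) (w : Fin J → ℝ) : Set (Fin I → ℝ) :=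
  {m | (∀ i, 0 ≤ m i) ∧ ∀ j ∈ Jstar A C ν μ, w j ≤ ∑ i, A j i * m i / μ i}

/-- The Lyapunov function `F`. -/
def Ffun {I : ℕ} (α : ℝ) (κ ν μ : Fin I → ℝ) (n : Fin I → ℝ) : ℝ :=
  (1 / (α + 1)) * ∑ i, ν i * κ i * μ i ^ (α - 1) * (n i / ν i) ^ (α + 1)

/-- The function `K` (the derivative of `F` along fluid model solutions). -/
def Kfun {I : ℕ} (α : ℝ) (κ ν μ : Fin I → ℝ)
    (Λ : (Fin I → ℝ) → Fin I → ℝ) (n : Fin I → ℝ) : ℝ :=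
  ∑ i, if 0 < n i then κ i * (μ i * n i / ν i) ^ α * (ν i / μ i - Λ n i) else 0

/-!
Optimality of `Λ(n)` for the strictly concave objective `G_n` gives the first-order condition
`∑_{n_i>0} κ_i n_i^α Λ_i^{-α} (M_i - Λ_i) ≤ 0` for every feasible `M`. Since `x ↦ x^{-α}` is
strictly decreasing, `K(n) = -∑_{n_i>0} κ_i n_i^α ρ_i^{-α} (Λ_i - ρ_i)` is at most the left side
with `M = ρ`, which is feasible by the load condition, and strictly so unless `Λ_i = ρ_i` on
`I₊(n)`, in which case `n` is invariant.

For continuity, let `n_k → n` with `Λ(n_k) → L` (the allocations are bounded). Testing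
optimality against `ε e_i` bounds `Λ_i(n_k)` below by a multiple of `n_{k,i}`, so `L_i > 0` on
`I₊(n)` and the terms of the routes that empty out vanish in the limit. Passing to the limit in
the first-order conditions at `n_k` and at `n` gives two opposite inequalities between `L` and
`Λ(n)`, which by the same monotonicity force `L = Λ(n)` on `I₊(n)`.
-/

open Filter Topology

variable {I J : ℕ} {A : Fin J → Fin I → ℝ} {C : Fin J → ℝ} {α : ℝ} {κ n L M : Fin I → ℝ}

section Feasible

lemma convex_feasible : Convex ℝ (Feasible A C n) := by
  rintro L ⟨hL0, hLn, hLC⟩ M ⟨hM0, hMn, hMC⟩ a b ha hb hab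
  refine ⟨fun i => ?_, fun i hi => ?_, fun j => ?_⟩
  · simp only [Pi.add_apply, Pi.smul_apply, smul_eq_mul]
    have := hL0 i; have := hM0 i; positivity
  · simp [hLn i hi, hMn i hi]
  · calc ∑ i, A j i * (a • L + b • M) i
        = a * ∑ i, A j i * L i + b * ∑ i, A j i * M i := by
          simp only [Pi.add_apply, Pi.smul_apply, smul_eq_mul, Finset.mul_sum,
            ← Finset.sum_add_distrib]
          exact Finset.sum_congr rfl fun i _ => by ring
      _ ≤ a * C j + b * C j := by gcongr; exacts [hLC j, hMC j]
      _ = C j := by rw [← add_mul, hab, one_mul]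

lemma mem_feasible_of_le (hA : ∀ j i, 0 ≤ A j i) (hM : M ∈ Feasible A C n)
    (hL0 : ∀ i, 0 ≤ L i) (hLM : ∀ i, L i ≤ M i) : L ∈ Feasible A C n :=
  ⟨hL0, fun i hi => le_antisymm (hM.2.1 i hi ▸ hLM i) (hL0 i),
    fun j => (Finset.sum_le_sum fun i _ => mul_le_mul_of_nonneg_left (hLM i) (hA j i)).trans
      (hM.2.2 j)⟩

lemma indicator_mem_feasible (hA : ∀ j i, 0 ≤ A j i) {m x : Fin I → ℝ}
    (hx0 : ∀ i, 0 ≤ x i) (hxC : ∀ j, ∑ i, A j i * x i ≤ C j) (hnm : ∀ i, 0 < n i → 0 < m i) :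
    {i | 0 < n i}.indicator x ∈ Feasible A C m := by
  refine ⟨fun i => Set.indicator_nonneg (fun i _ => hx0 i) i, fun i hi => ?_, fun j => ?_⟩
  · exact Set.indicator_of_notMem (show i ∉ {i | 0 < n i} from fun h => (hnm i h).ne' hi) x
  · refine (Finset.sum_le_sum fun i _ => mul_le_mul_of_nonneg_left ?_ (hA j i)).trans (hxC j)
    exact Set.indicator_le_self' (fun i _ => hx0 i) i

lemma le_sum_capacity_of_mem_feasible (hA : ∀ j i, 0 ≤ A j i) (hAcol : ∀ i, ∃ j, A j i = 1)
    (hC : ∀ j, 0 ≤ C j) (hL : L ∈ Feasible A C n) (i : Fin I) : L i ≤ ∑ j, C j := by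
  obtain ⟨j, hj⟩ := hAcol i
  calc L i = A j i * L i := by rw [hj, one_mul]
    _ ≤ ∑ i, A j i * L i :=
        Finset.single_le_sum (fun i _ => mul_nonneg (hA j i) (hL.1 i)) (Finset.mem_univ i)
    _ ≤ C j := hL.2.2 j
    _ ≤ ∑ j, C j := Finset.single_le_sum (fun j _ => hC j) (Finset.mem_univ j)

lemma exists_const_feasible (hC : ∀ j, 0 < C j) :
    ∃ ε > 0, ∀ j, ∑ i, A j i * ε ≤ C j := by
  have : ∀ᶠ ε in 𝓝[>] (0 : ℝ), ∀ j, ∑ i, A j i * ε ≤ C j := by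
    refine eventually_all.2 fun j => nhdsWithin_le_nhds ?_
    have hcont : Continuous fun ε : ℝ => ∑ i, A j i * ε := by fun_prop
    exact (hcont.tendsto 0).eventually (eventually_le_nhds (by simpa using hC j))
  obtain ⟨ε, hε, hεpos⟩ := (this.and self_mem_nhdsWithin).exists
  exact ⟨ε, hεpos, hε⟩

end Feasible

section Objective

def fairUtility (α x : ℝ) : ℝ := if α = 1 then Real.log x else x ^ (1 - α) / (1 - α)

lemma fairUtility_of_ne_one (h : α ≠ 1) (x : ℝ) : fairUtility α x = x ^ (1 - α) / (1 - α) :=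
  if_neg h

lemma hasDerivAt_fairUtility {x : ℝ} (hx : 0 < x) : HasDerivAt (fairUtility α) (x ^ (-α)) x := by
  rcases eq_or_ne α 1 with rfl | h
  · rw [show fairUtility 1 = Real.log from funext fun x => if_pos rfl, Real.rpow_neg_one]
    exact Real.hasDerivAt_log hx.ne'
  · have h1 : (1 : ℝ) - α ≠ 0 := sub_ne_zero.2 h.symm
    refine ((Real.hasDerivAt_rpow_const (p := 1 - α) (.inl hx.ne')).div_const (1 - α)).congr_deriv
      ?_ |>.congr_of_eventuallyEq (.of_forall fun y => fairUtility_of_ne_one h y)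
    rw [show (1 : ℝ) - α - 1 = -α by ring, mul_div_cancel_left₀ _ h1]

def fairObjective (α : ℝ) (κ n L : Fin I → ℝ) : ℝ :=
  ∑ i, if 0 < n i then κ i * n i ^ α * fairUtility α (L i) else 0

lemma Gfun_eq_fairObjective (h : α < 1 ∨ ∀ i, 0 < n i → 0 < L i) :
    Gfun α κ n L = fairObjective α κ n L := by
  have hbot : ¬(1 ≤ α ∧ ∃ i, 0 < n i ∧ L i = 0) := by
    rintro ⟨hα, i, hi, hL⟩
    rcases h with h | h
    · linarith
    · exact (h i hi).ne' hL
  rw [Gfun, if_neg hbot, fairObjective]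
  split_ifs with hα
  · norm_cast
    refine Finset.sum_congr rfl fun i _ => ?_
    simp [fairUtility, hα]
  · norm_cast
    refine Finset.sum_congr rfl fun i _ => ?_
    rw [fairUtility_of_ne_one hα, mul_div_assoc]

lemma IsAlloc.fairObjective_le (hL : IsAlloc A C α κ n L) (hM : M ∈ Feasible A C n)
    (hLpos : α < 1 ∨ ∀ i, 0 < n i → 0 < L i) (hMpos : α < 1 ∨ ∀ i, 0 < n i → 0 < M i) :
    fairObjective α κ n M ≤ fairObjective α κ n L := by
  have := hL.2 M hM
  rwa [Gfun_eq_fairObjective hLpos, Gfun_eq_fairObjective hMpos, EReal.coe_le_coe_iff] at this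

def fairObjectiveDeriv (α : ℝ) (κ n L M : Fin I → ℝ) : ℝ :=
  ∑ i, if 0 < n i then κ i * n i ^ α * (L i ^ (-α) * (M i - L i)) else 0

lemma hasDerivAt_fairObjective_lineMap (hL : ∀ i, 0 < n i → 0 < L i) :
    HasDerivAt (fun t : ℝ => fairObjective α κ n (L + t • (M - L)))
      (fairObjectiveDeriv α κ n L M) 0 := by
  refine HasDerivAt.fun_sum fun i _ => ?_
  split_ifs with hi
  · have hline : HasDerivAt (fun t : ℝ => L i + t * (M i - L i)) (M i - L i) 0 := by
      simpa using ((hasDerivAt_id (0 : ℝ)).mul_const (M i - L i)).const_add (L i)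
    have hu : HasDerivAt (fairUtility α) (L i ^ (-α)) (L i + 0 * (M i - L i)) := by
      simpa using hasDerivAt_fairUtility (α := α) (hL i hi)
    simpa [mul_assoc] using (hu.comp 0 hline).const_mul (κ i * n i ^ α)
  · exact hasDerivAt_const 0 0

lemma IsAlloc.fairObjectiveDeriv_nonpos (hL : IsAlloc A C α κ n L)
    (hLpos : ∀ i, 0 < n i → 0 < L i) (hM : M ∈ Feasible A C n) :
    fairObjectiveDeriv α κ n L M ≤ 0 := by
  set g : ℝ → ℝ := fun t => fairObjective α κ n (L + t • (M - L))
  have hslope := hasDerivAt_iff_tendsto_slope.1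
    (hasDerivAt_fairObjective_lineMap (α := α) (κ := κ) (M := M) hLpos)
  refine le_of_tendsto
    (hslope.mono_left (nhdsWithin_mono 0 fun t (ht : t ∈ Ioi 0) => ne_of_gt ht)) ?_
  filter_upwards [Ioo_mem_nhdsGT (zero_lt_one' ℝ)] with t ht
  have hmem : L + t • (M - L) ∈ Feasible A C n :=
    convex_feasible.add_smul_sub_mem hL.1 hM ⟨ht.1.le, ht.2.le⟩
  have hpos : ∀ i, 0 < n i → 0 < (L + t • (M - L)) i := fun i hi => by
    have := hM.1 i; have := hLpos i hi
    simp only [Pi.add_apply, Pi.smul_apply, Pi.sub_apply, smul_eq_mul]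
    nlinarith [ht.1, ht.2]
  have hle : g t ≤ g 0 := by
    simpa [g] using hL.fairObjective_le hmem (.inr hLpos) (.inr hpos)
  rw [slope_def_field, sub_zero]
  exact div_nonpos_of_nonpos_of_nonneg (sub_nonpos.2 hle) ht.1.le

lemma fairUtility_nonneg (hα : α < 1) {x : ℝ} (hx : 0 ≤ x) : 0 ≤ fairUtility α x := by
  rw [fairUtility_of_ne_one hα.ne]
  exact div_nonneg (Real.rpow_nonneg hx _) (sub_pos.2 hα).le

lemma fairUtility_mul (hα : α < 1) {c x : ℝ} (hc : 0 ≤ c) (hx : 0 ≤ x) :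
    fairUtility α (c * x) = c ^ (1 - α) * fairUtility α x := by
  rw [fairUtility_of_ne_one hα.ne, fairUtility_of_ne_one hα.ne, Real.mul_rpow hc hx, mul_div_assoc]

lemma fairUtility_lineMap_ge (hα0 : 0 ≤ α) (hα : α < 1) {x y t : ℝ} (hx : 0 ≤ x) (hy : 0 ≤ y)
    (ht0 : 0 ≤ t) (ht1 : t ≤ 1) :
    (1 - t) * fairUtility α x ≤ fairUtility α (x + t * (y - x)) := by
  have h1t : 0 ≤ 1 - t := by linarith
  calc (1 - t) * fairUtility α x ≤ (1 - t) ^ (1 - α) * fairUtility α x := by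
        refine mul_le_mul_of_nonneg_right ?_ (fairUtility_nonneg hα hx)
        exact Real.self_le_rpow_of_le_one h1t (by linarith) (by linarith)
    _ = fairUtility α ((1 - t) * x) := (fairUtility_mul hα h1t hx).symm
    _ ≤ fairUtility α (x + t * (y - x)) := by
        rw [fairUtility_of_ne_one hα.ne, fairUtility_of_ne_one hα.ne]
        have hxt : (1 - t) * x ≤ x + t * (y - x) := by nlinarith [mul_nonneg ht0 hy]
        gcongr

/-- For `α < 1` the utility has infinite slope at `0`, so moving a little towards `M` gains more
on route `i` than it loses elsewhere. -/
lemma IsAlloc.pos_of_lt_one (hL : IsAlloc A C α κ n L) (hα : 0 < α) (hα1 : α < 1)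
    (hκ : ∀ i, 0 < κ i) (hM : M ∈ Feasible A C n) {i : Fin I} (hi : 0 < n i) (hMi : 0 < M i) :
    0 < L i := by
  refine (hL.1.1 i).lt_of_ne fun hLi => ?_
  set c := κ i * n i ^ α * fairUtility α (M i)
  have hc : 0 < c := by
    have := hκ i
    have := sub_pos.2 hα1
    simp only [c, fairUtility_of_ne_one hα1.ne]
    positivity
  have hsmall : ∀ᶠ t in 𝓝[>] (0 : ℝ), t < 1 ∧ t ^ α * fairObjective α κ n L < c := by
    have hlim : Tendsto (fun t : ℝ => t ^ α * fairObjective α κ n L) (𝓝 0) (𝓝 0) := by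
      simpa [Real.zero_rpow hα.ne'] using
        ((Real.continuous_rpow_const hα.le).tendsto 0).mul_const (fairObjective α κ n L)
    exact nhdsWithin_le_nhds
      ((eventually_lt_nhds one_pos).and (hlim.eventually (eventually_lt_nhds hc)))
  obtain ⟨t, ⟨ht1, htW⟩, ht0⟩ := (hsmall.and self_mem_nhdsWithin).exists
  have hgain : (1 - t) * fairObjective α κ n L + t ^ (1 - α) * c
      ≤ fairObjective α κ n (L + t • (M - L)) := by
    simp only [fairObjective]
    rw [Finset.mul_sum, show t ^ (1 - α) * c = ∑ k, Pi.single i (t ^ (1 - α) * c) k by simp,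
      ← Finset.sum_add_distrib]
    refine Finset.sum_le_sum fun k _ => ?_
    simp only [Pi.add_apply, Pi.smul_apply, Pi.sub_apply, smul_eq_mul, Pi.single_apply]
    split_ifs with hk hki hki
    · subst hki
      have hu0 : fairUtility α 0 = 0 := by
        rw [fairUtility_of_ne_one hα1.ne, Real.zero_rpow (sub_pos.2 hα1).ne', zero_div]
      rw [← hLi, hu0, zero_add, sub_zero, fairUtility_mul hα1 ht0.le (hM.1 k)]
      exact le_of_eq (by ring)
    · have := fairUtility_lineMap_ge hα.le hα1 (hL.1.1 k) (hM.1 k) ht0.le ht1.le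
      have := hκ k
      rw [add_zero, ← mul_assoc, mul_comm (1 - t), mul_assoc]
      gcongr
    · exact absurd (hki ▸ hi) hk
    · simp
  have hlt : fairObjective α κ n L < (1 - t) * fairObjective α κ n L + t ^ (1 - α) * c := by
    have htt : t ^ (1 - α) * t ^ α = t := by rw [← Real.rpow_add ht0]; simp
    have := mul_lt_mul_of_pos_left htW (Real.rpow_pos_of_pos ht0 (1 - α))
    rw [← mul_assoc, htt] at this
    linarith
  exact (hlt.trans_le hgain).not_ge (hL.fairObjective_le
    (convex_feasible.add_smul_sub_mem hL.1 hM ⟨ht0.le, ht1.le⟩) (.inl hα1) (.inl hα1))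

lemma IsAlloc.pos (hL : IsAlloc A C α κ n L) (hα : 0 < α) (hκ : ∀ i, 0 < κ i)
    (hM : M ∈ Feasible A C n) (hMpos : ∀ i, 0 < n i → 0 < M i) {i : Fin I} (hi : 0 < n i) :
    0 < L i := by
  rcases lt_or_ge α 1 with hα1 | hα1
  · exact hL.pos_of_lt_one hα hα1 hκ hM hi (hMpos i hi)
  refine (hL.1.1 i).lt_of_ne fun hLi => ?_
  have hbot : Gfun α κ n L = ⊥ := if_pos ⟨hα1, i, hi, hLi.symm⟩
  have := hL.2 M hM
  rw [hbot, Gfun_eq_fairObjective (.inr hMpos)] at this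
  exact EReal.coe_ne_bot _ (le_bot_iff.1 this)

end Objective

section Monotonicity

lemma rpow_neg_sub_mul_sub_pos {x y : ℝ} (hα : 0 < α) (hx : 0 < x) (hy : 0 < y) (hxy : x ≠ y) :
    0 < (x ^ (-α) - y ^ (-α)) * (y - x) := by
  rcases hxy.lt_or_gt with h | h
  · exact mul_pos (sub_pos.2 (Real.rpow_lt_rpow_of_neg hx h (neg_neg_of_pos hα))) (sub_pos.2 h)
  · exact mul_pos_of_neg_of_neg (sub_neg.2 (Real.rpow_lt_rpow_of_neg hy h (neg_neg_of_pos hα)))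
      (sub_neg.2 h)

lemma rpow_neg_sub_mul_sub_nonneg {x y : ℝ} (hα : 0 < α) (hx : 0 < x) (hy : 0 < y) :
    0 ≤ (x ^ (-α) - y ^ (-α)) * (y - x) := by
  rcases eq_or_ne x y with rfl | hxy
  · simp
  · exact (rpow_neg_sub_mul_sub_pos hα hx hy hxy).le

variable {x y : Fin I → ℝ}

lemma fairObjectiveDeriv_congr (h : ∀ i, 0 < n i → M i = L i) :
    fairObjectiveDeriv α κ n x M = fairObjectiveDeriv α κ n x L :=
  Finset.sum_congr rfl fun i _ => by split_ifs with hi <;> simp [h i, hi]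

lemma fairObjectiveDeriv_add_swap :
    fairObjectiveDeriv α κ n x y + fairObjectiveDeriv α κ n y x
      = ∑ i, if 0 < n i then κ i * n i ^ α * ((x i ^ (-α) - y i ^ (-α)) * (y i - x i)) else 0 := by
  rw [fairObjectiveDeriv, fairObjectiveDeriv, ← Finset.sum_add_distrib]
  exact Finset.sum_congr rfl fun i _ => by split_ifs <;> ring

lemma fairObjectiveDeriv_add_swap_term_nonneg (hα : 0 < α) (hκ : ∀ i, 0 < κ i)
    (hx : ∀ i, 0 < n i → 0 < x i) (hy : ∀ i, 0 < n i → 0 < y i) (i : Fin I) :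
    0 ≤ if 0 < n i then κ i * n i ^ α * ((x i ^ (-α) - y i ^ (-α)) * (y i - x i)) else 0 := by
  split_ifs with hi
  · have := hκ i
    exact mul_nonneg (by positivity) (rpow_neg_sub_mul_sub_nonneg hα (hx i hi) (hy i hi))
  · exact le_rfl

lemma fairObjectiveDeriv_add_swap_nonneg (hα : 0 < α) (hκ : ∀ i, 0 < κ i)
    (hx : ∀ i, 0 < n i → 0 < x i) (hy : ∀ i, 0 < n i → 0 < y i) :
    0 ≤ fairObjectiveDeriv α κ n x y + fairObjectiveDeriv α κ n y x := by
  rw [fairObjectiveDeriv_add_swap]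
  exact Finset.sum_nonneg fun i _ => fairObjectiveDeriv_add_swap_term_nonneg hα hκ hx hy i

lemma fairObjectiveDeriv_add_swap_pos (hα : 0 < α) (hκ : ∀ i, 0 < κ i)
    (hx : ∀ i, 0 < n i → 0 < x i) (hy : ∀ i, 0 < n i → 0 < y i) {i : Fin I} (hi : 0 < n i)
    (hxy : x i ≠ y i) : 0 < fairObjectiveDeriv α κ n x y + fairObjectiveDeriv α κ n y x := by
  rw [fairObjectiveDeriv_add_swap]
  refine Finset.sum_pos' (fun k _ => fairObjectiveDeriv_add_swap_term_nonneg hα hκ hx hy k)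
    ⟨i, Finset.mem_univ i, ?_⟩
  rw [if_pos hi]
  have := hκ i
  exact mul_pos (by positivity) (rpow_neg_sub_mul_sub_pos hα (hx i hi) (hy i hi) hxy)

lemma eq_of_fairObjectiveDeriv_nonpos (hα : 0 < α) (hκ : ∀ i, 0 < κ i)
    (hx : ∀ i, 0 < n i → 0 < x i) (hy : ∀ i, 0 < n i → 0 < y i)
    (hxy : fairObjectiveDeriv α κ n x y ≤ 0) (hyx : fairObjectiveDeriv α κ n y x ≤ 0)
    {i : Fin I} (hi : 0 < n i) : x i = y i := by
  by_contra hne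
  linarith [fairObjectiveDeriv_add_swap_pos hα hκ hx hy hi hne]

end Monotonicity

section Drift

variable {ν μ : Fin I → ℝ} {Λ : (Fin I → ℝ) → Fin I → ℝ}

lemma IsAlloc.pos_of_capacity_pos (hL : IsAlloc A C α κ n L) (hA : ∀ j i, 0 ≤ A j i)
    (hC : ∀ j, 0 < C j) (hα : 0 < α) (hκ : ∀ i, 0 < κ i) : ∀ i, 0 < n i → 0 < L i := by
  obtain ⟨ε, hε, hεC⟩ := exists_const_feasible (A := A) hC
  refine fun i hi => hL.pos hα hκ (indicator_mem_feasible hA (fun _ => hε.le) hεC fun _ h => h)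
    (fun k hk => ?_) hi
  simpa [Set.indicator_of_mem (show k ∈ {i | 0 < n i} from hk)] using hε

lemma IsAlloc.fairObjectiveDeriv_load_nonpos (hL : IsAlloc A C α κ n L) (hA : ∀ j i, 0 ≤ A j i)
    (hC : ∀ j, 0 < C j) (hα : 0 < α) (hκ : ∀ i, 0 < κ i) (hν : ∀ i, 0 < ν i) (hμ : ∀ i, 0 < μ i)
    (hload : ∀ j, ∑ i, A j i * (ν i / μ i) ≤ C j) :
    fairObjectiveDeriv α κ n L (fun i => ν i / μ i) ≤ 0 := by
  have hmem := indicator_mem_feasible (n := n) hA (fun i => (div_pos (hν i) (hμ i)).le) hload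
    fun _ h => h
  rw [← fairObjectiveDeriv_congr (M := {i | 0 < n i}.indicator fun i => ν i / μ i)
    fun i hi => Set.indicator_of_mem (show i ∈ {i | 0 < n i} from hi) _]
  exact hL.fairObjectiveDeriv_nonpos (hL.pos_of_capacity_pos hA hC hα hκ) hmem

lemma Kfun_eq_neg_fairObjectiveDeriv (hν : ∀ i, 0 < ν i) (hμ : ∀ i, 0 < μ i) :
    Kfun α κ ν μ Λ n = -fairObjectiveDeriv α κ n (fun i => ν i / μ i) (Λ n) := by
  rw [Kfun, fairObjectiveDeriv, ← Finset.sum_neg_distrib]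
  refine Finset.sum_congr rfl fun i _ => ?_
  split_ifs with hi
  · have hρ := div_pos (hν i) (hμ i)
    rw [show μ i * n i / ν i = n i * (ν i / μ i)⁻¹ by field_simp,
      Real.mul_rpow hi.le (by positivity), Real.inv_rpow hρ.le, ← Real.rpow_neg hρ.le]
    ring
  · simp

lemma Kfun_nonpos (hΛ : IsAlloc A C α κ n (Λ n)) (hA : ∀ j i, 0 ≤ A j i) (hC : ∀ j, 0 < C j)
    (hα : 0 < α) (hκ : ∀ i, 0 < κ i) (hν : ∀ i, 0 < ν i) (hμ : ∀ i, 0 < μ i)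
    (hload : ∀ j, ∑ i, A j i * (ν i / μ i) ≤ C j) : Kfun α κ ν μ Λ n ≤ 0 := by
  rw [Kfun_eq_neg_fairObjectiveDeriv hν hμ]
  linarith [hΛ.fairObjectiveDeriv_load_nonpos hA hC hα hκ hν hμ hload,
    fairObjectiveDeriv_add_swap_nonneg hα hκ (hΛ.pos_of_capacity_pos hA hC hα hκ)
      (fun i _ => div_pos (hν i) (hμ i))]

lemma Kfun_neg_of_ne (hΛ : IsAlloc A C α κ n (Λ n)) (hA : ∀ j i, 0 ≤ A j i) (hC : ∀ j, 0 < C j)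
    (hα : 0 < α) (hκ : ∀ i, 0 < κ i) (hν : ∀ i, 0 < ν i) (hμ : ∀ i, 0 < μ i)
    (hload : ∀ j, ∑ i, A j i * (ν i / μ i) ≤ C j) {i : Fin I} (hi : 0 < n i)
    (hne : Λ n i ≠ ν i / μ i) : Kfun α κ ν μ Λ n < 0 := by
  rw [Kfun_eq_neg_fairObjectiveDeriv hν hμ]
  linarith [hΛ.fairObjectiveDeriv_load_nonpos hA hC hα hκ hν hμ hload,
    fairObjectiveDeriv_add_swap_pos hα hκ (hΛ.pos_of_capacity_pos hA hC hα hκ)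
      (fun i _ => div_pos (hν i) (hμ i)) hi hne]

lemma isFluidSol_const (hμ : ∀ i, 0 < μ i) (hn : ∀ i, 0 ≤ n i)
    (hload : ∀ j, ∑ i, A j i * (ν i / μ i) ≤ C j) (hfix : ∀ i, 0 < n i → Λ n i = ν i / μ i) :
    IsFluidSol A C ν μ Λ (fun _ => n) := by
  refine ⟨fun i T _ ε hε => ⟨1, one_pos, fun m a b _ _ _ => by simpa using hε⟩, fun _ _ => hn,
    fun _ _ _ => ⟨fun i => ⟨fun hi => ?_, fun _ => hasDerivWithinAt_const _ _ _⟩, fun j => ?_⟩⟩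
  · rw [hfix i hi, mul_div_cancel₀ _ (hμ i).ne', sub_self]
    exact hasDerivWithinAt_const _ _ _
  · refine le_of_eq_of_le (Finset.sum_congr rfl fun i _ => ?_) (hload j)
    split_ifs with hi
    · rw [hfix i hi]
    · rfl

end Drift

section Bounds

variable {ε : ℝ}

lemma single_mem_feasible (hA : ∀ j i, 0 ≤ A j i) (hε : 0 ≤ ε)
    (hεC : ∀ j, ∑ i, A j i * ε ≤ C j) {i : Fin I} (hi : 0 < n i) :
    Pi.single i ε ∈ Feasible A C n := by
  refine mem_feasible_of_le hA (indicator_mem_feasible (n := n) hA (fun _ => hε) hεC fun _ h => h)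
    (fun k => ?_) fun k => ?_
  · rw [Pi.single_apply]; split_ifs <;> simp [hε]
  · rw [Pi.single_apply]
    split_ifs with hk
    · subst hk; simp [hi]
    · exact Set.indicator_nonneg (fun _ _ => hε) k

def weightedRateSum (α : ℝ) (κ n L : Fin I → ℝ) : ℝ :=
  ∑ i, if 0 < n i then κ i * n i ^ α * L i ^ (1 - α) else 0

lemma fairObjective_eq_weightedRateSum_div (hα : α ≠ 1) :
    fairObjective α κ n L = weightedRateSum α κ n L / (1 - α) := by
  rw [fairObjective, weightedRateSum, Finset.sum_div]
  exact Finset.sum_congr rfl fun i _ => by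
    split_ifs <;> simp [fairUtility_of_ne_one hα, mul_div_assoc]

lemma IsAlloc.weightedRateSum_le (hL : IsAlloc A C α κ n L) (hA : ∀ j i, 0 ≤ A j i)
    (hAcol : ∀ i, ∃ j, A j i = 1) (hC : ∀ j, 0 < C j) (hα : 0 < α) (hκ : ∀ i, 0 < κ i)
    (hn : ∀ i, 0 ≤ n i) (hε : 0 < ε) (hεC : ∀ j, ∑ i, A j i * ε ≤ C j) :
    weightedRateSum α κ n L ≤ max (ε ^ (1 - α)) ((∑ j, C j) ^ (1 - α)) * ∑ i, κ i * n i ^ α := by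
  have hw : ∀ i, 0 ≤ κ i * n i ^ α := fun i => by have := hκ i; have := hn i; positivity
  rw [Finset.mul_sum]
  rcases le_or_gt α 1 with hα1 | hα1
  · refine Finset.sum_le_sum fun i _ => ?_
    split_ifs with hi
    · rw [mul_comm (max _ _)]
      refine mul_le_mul_of_nonneg_left ((Real.rpow_le_rpow (hL.1.1 i) ?_ (by linarith)).trans
        (le_max_right _ _)) (hw i)
      exact le_sum_capacity_of_mem_feasible hA hAcol (fun j => (hC j).le) hL.1 i
    · exact mul_nonneg (le_max_of_le_left (Real.rpow_pos_of_pos hε _).le) (hw i)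
  · have hU := indicator_mem_feasible (n := n) hA (fun _ => hε.le) hεC fun _ h => h
    have hUpos : ∀ i, 0 < n i → 0 < ({i | 0 < n i}.indicator fun _ => ε) i := fun i hi => by
      simpa [Set.indicator_of_mem (show i ∈ {i | 0 < n i} from hi)] using hε
    have hle := hL.fairObjective_le hU (.inr (hL.pos_of_capacity_pos hA hC hα hκ)) (.inr hUpos)
    rw [fairObjective_eq_weightedRateSum_div hα1.ne', fairObjective_eq_weightedRateSum_div hα1.ne',
      div_le_div_right_of_neg (by linarith)] at hle
    refine hle.trans (Finset.sum_le_sum fun i _ => ?_)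
    split_ifs with hi
    · rw [Set.indicator_of_mem (show i ∈ {i | 0 < n i} from hi), mul_comm (max _ _)]
      exact mul_le_mul_of_nonneg_left (le_max_left _ _) (hw i)
    · exact mul_nonneg (le_max_of_le_left (Real.rpow_pos_of_pos hε _).le) (hw i)

lemma IsAlloc.mul_rpow_le_rpow_mul_weightedRateSum (hL : IsAlloc A C α κ n L)
    (hLpos : ∀ i, 0 < n i → 0 < L i) (hA : ∀ j i, 0 ≤ A j i) (hε : 0 ≤ ε)
    (hεC : ∀ j, ∑ i, A j i * ε ≤ C j) {i : Fin I} (hi : 0 < n i) :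
    κ i * n i ^ α * ε ≤ L i ^ α * weightedRateSum α κ n L := by
  have hD := hL.fairObjectiveDeriv_nonpos hLpos (single_mem_feasible hA hε hεC hi)
  have hsplit : fairObjectiveDeriv α κ n L (Pi.single i ε)
      = κ i * n i ^ α * L i ^ (-α) * ε - weightedRateSum α κ n L := by
    rw [fairObjectiveDeriv, weightedRateSum, show κ i * n i ^ α * L i ^ (-α) * ε
      = ∑ k, Pi.single i (κ i * n i ^ α * L i ^ (-α) * ε) k by simp, ← Finset.sum_sub_distrib]
    refine Finset.sum_congr rfl fun k _ => ?_
    rw [Pi.single_apply, Pi.single_apply]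
    split_ifs with hk hki hki
    · subst hki
      rw [Real.rpow_sub (hLpos k hk), Real.rpow_one, Real.rpow_neg (hLpos k hk).le]
      field_simp
    · rw [Real.rpow_sub (hLpos k hk), Real.rpow_one, Real.rpow_neg (hLpos k hk).le]
      field_simp
      ring
    · exact absurd (hki ▸ hi) hk
    · simp
  have hLi := hLpos i hi
  have hcancel : L i ^ α * L i ^ (-α) = 1 := by rw [← Real.rpow_add hLi]; simp
  calc κ i * n i ^ α * ε = L i ^ α * (κ i * n i ^ α * L i ^ (-α) * ε) := by
        linear_combination (-(κ i * n i ^ α * ε)) * hcancel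
    _ ≤ L i ^ α * weightedRateSum α κ n L := by
        gcongr
        linarith

lemma IsAlloc.mul_rpow_le (hL : IsAlloc A C α κ n L) (hA : ∀ j i, 0 ≤ A j i)
    (hAcol : ∀ i, ∃ j, A j i = 1) (hC : ∀ j, 0 < C j) (hα : 0 < α) (hκ : ∀ i, 0 < κ i)
    (hn : ∀ i, 0 ≤ n i) (hε : 0 < ε) (hεC : ∀ j, ∑ i, A j i * ε ≤ C j) {i : Fin I} (hi : 0 < n i) :
    κ i * n i ^ α * ε
      ≤ L i ^ α * (max (ε ^ (1 - α)) ((∑ j, C j) ^ (1 - α)) * ∑ i, κ i * n i ^ α) :=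
  (hL.mul_rpow_le_rpow_mul_weightedRateSum (hL.pos_of_capacity_pos hA hC hα hκ) hA hε.le hεC
    hi).trans (mul_le_mul_of_nonneg_left (hL.weightedRateSum_le hA hAcol hC hα hκ hn hε hεC)
      (Real.rpow_nonneg (hL.1.1 i) α))

lemma rpow_mul_rpow_one_sub_le {x y Q : ℝ} (hα : 1 ≤ α) (hx : 0 < x) (hy : 0 < y)
    (h : x ^ α ≤ y ^ α * Q) : x ^ α * y ^ (1 - α) ≤ x * Q ^ ((α - 1) / α) := by
  have hα0 : 0 < α := by linarith
  have hxy : (x / y) ^ α ≤ Q := by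
    rwa [Real.div_rpow hx.le hy.le, div_le_iff₀' (Real.rpow_pos_of_pos hy α)]
  calc x ^ α * y ^ (1 - α) = x * ((x / y) ^ α) ^ ((α - 1) / α) := by
        rw [← Real.rpow_mul (div_pos hx hy).le, mul_div_cancel₀ _ hα0.ne',
          Real.div_rpow hx.le hy.le, Real.rpow_sub_one hx.ne', Real.rpow_sub hy, Real.rpow_one,
          Real.rpow_sub_one hy.ne']
        field_simp
    _ ≤ x * Q ^ ((α - 1) / α) := by
        gcongr

end Bounds

section Continuity

variable {p q : ℕ → Fin I → ℝ}

/-- For `α ≤ 1` because the rates are bounded, for `α > 1` because `IsAlloc.mul_rpow_le` bounds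
`q k i` below by a multiple of `p k i`. -/
lemma tendsto_rateTerm_zero (hq : ∀ k, IsAlloc A C α κ (p k) (q k)) (hA : ∀ j i, 0 ≤ A j i)
    (hAcol : ∀ i, ∃ j, A j i = 1) (hC : ∀ j, 0 < C j) (hα : 0 < α) (hκ : ∀ i, 0 < κ i)
    (hp0 : ∀ k i, 0 ≤ p k i) {S : ℝ} (hS : ∀ᶠ k in atTop, ∑ i, κ i * p k i ^ α ≤ S) {i : Fin I}
    (hpi : Tendsto (fun k => p k i) atTop (𝓝 0)) :
    Tendsto (fun k => if 0 < p k i then κ i * p k i ^ α * q k i ^ (1 - α) else 0) atTop (𝓝 0) := by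
  have hnonneg : ∀ k, 0 ≤ if 0 < p k i then κ i * p k i ^ α * q k i ^ (1 - α) else 0 := fun k => by
    have := hκ i; have := hp0 k i; have := (hq k).1.1 i
    split_ifs <;> positivity
  rcases le_or_gt α 1 with hα1 | hα1
  · have hlim : Tendsto (fun k => κ i * p k i ^ α * (∑ j, C j) ^ (1 - α)) atTop (𝓝 0) := by
      simpa [Real.zero_rpow hα.ne'] using
        ((hpi.rpow_const (.inr hα.le)).const_mul (κ i)).mul_const ((∑ j, C j) ^ (1 - α))
    refine squeeze_zero hnonneg (fun k => ?_) hlim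
    split_ifs with hpk
    · have := hκ i
      exact mul_le_mul_of_nonneg_left (Real.rpow_le_rpow ((hq k).1.1 i)
        (le_sum_capacity_of_mem_feasible hA hAcol (fun j => (hC j).le) (hq k).1 i) (by linarith))
        (by positivity)
    · simp [le_antisymm (not_lt.1 hpk) (hp0 k i), Real.zero_rpow hα.ne']
  obtain ⟨ε, hε, hεC⟩ := exists_const_feasible (A := A) hC
  set Q := max (ε ^ (1 - α)) ((∑ j, C j) ^ (1 - α)) * S / (κ i * ε)
  have hQ : 0 < κ i * ε := mul_pos (hκ i) hε
  refine squeeze_zero' (.of_forall hnonneg) ?_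
    (by simpa using (hpi.const_mul (κ i)).mul_const (Q ^ ((α - 1) / α)))
  filter_upwards [hS] with k hk
  split_ifs with hpk
  · have hqk := (hq k).pos_of_capacity_pos hA hC hα hκ i hpk
    have hlow := (hq k).mul_rpow_le hA hAcol hC hα hκ (hp0 k) hε hεC hpk
    have hpq : p k i ^ α ≤ q k i ^ α * Q := by
      rw [mul_div_assoc', le_div_iff₀ hQ]
      calc p k i ^ α * (κ i * ε) = κ i * p k i ^ α * ε := by ring
        _ ≤ _ := hlow.trans (mul_le_mul_of_nonneg_left (mul_le_mul_of_nonneg_left hk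
              (le_max_of_le_left (Real.rpow_pos_of_pos hε _).le))
              (Real.rpow_nonneg ((hq k).1.1 i) _))
    have := rpow_mul_rpow_one_sub_le hα1.le hpk hqk hpq
    have := hκ i
    calc κ i * p k i ^ α * q k i ^ (1 - α) = κ i * (p k i ^ α * q k i ^ (1 - α)) := by ring
      _ ≤ κ i * (p k i * Q ^ ((α - 1) / α)) := by gcongr
      _ = κ i * p k i * Q ^ ((α - 1) / α) := by ring
  · simp [le_antisymm (not_lt.1 hpk) (hp0 k i)]

lemma pos_of_tendsto_alloc (hq : ∀ k, IsAlloc A C α κ (p k) (q k)) (hA : ∀ j i, 0 ≤ A j i)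
    (hAcol : ∀ i, ∃ j, A j i = 1) (hC : ∀ j, 0 < C j) (hα : 0 < α) (hκ : ∀ i, 0 < κ i)
    (hp0 : ∀ k i, 0 ≤ p k i) (hp : Tendsto p atTop (𝓝 n)) (hqL : Tendsto q atTop (𝓝 L))
    {i : Fin I} (hi : 0 < n i) : 0 < L i := by
  obtain ⟨ε, hε, hεC⟩ := exists_const_feasible (A := A) hC
  set c := max (ε ^ (1 - α)) ((∑ j, C j) ^ (1 - α))
  have hpi := tendsto_pi_nhds.1 hp
  have hqi := tendsto_pi_nhds.1 hqL i
  have hlow : κ i * n i ^ α * ε ≤ L i ^ α * (c * ∑ i, κ i * n i ^ α) := by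
    refine le_of_tendsto_of_tendsto ((((hpi i).rpow_const (.inr hα.le)).const_mul _).mul_const _)
      ((hqi.rpow_const (.inr hα.le)).mul ((tendsto_finsetSum _ fun i _ =>
        ((hpi i).rpow_const (.inr hα.le)).const_mul (κ i)).const_mul c)) ?_
    filter_upwards [(hpi i).eventually (eventually_gt_nhds hi)] with k hk
    exact (hq k).mul_rpow_le hA hAcol hC hα hκ (hp0 k) hε hεC hk
  refine (ge_of_tendsto' hqi fun k => (hq k).1.1 i).lt_of_ne fun hL => ?_
  rw [← hL, Real.zero_rpow hα.ne', zero_mul] at hlow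
  have := hκ i
  exact hlow.not_gt (by positivity)

lemma tendsto_fairObjectiveDeriv (hq : ∀ k, IsAlloc A C α κ (p k) (q k)) (hA : ∀ j i, 0 ≤ A j i)
    (hAcol : ∀ i, ∃ j, A j i = 1) (hC : ∀ j, 0 < C j) (hα : 0 < α) (hκ : ∀ i, 0 < κ i)
    (hp0 : ∀ k i, 0 ≤ p k i) (hp : Tendsto p atTop (𝓝 n)) (hqL : Tendsto q atTop (𝓝 L))
    (hLpos : ∀ i, 0 < n i → 0 < L i) (M : Fin I → ℝ) :
    Tendsto (fun k => fairObjectiveDeriv α κ (p k) (q k) ({i | 0 < n i}.indicator M)) atTop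
      (𝓝 (fairObjectiveDeriv α κ n L M)) := by
  have hpi := tendsto_pi_nhds.1 hp
  have hqi := tendsto_pi_nhds.1 hqL
  refine tendsto_finsetSum _ fun i _ => ?_
  by_cases hi : 0 < n i
  · have hlim : Tendsto (fun k => κ i * p k i ^ α * (q k i ^ (-α) * (M i - q k i))) atTop
        (𝓝 (κ i * n i ^ α * (L i ^ (-α) * (M i - L i)))) :=
      (((hpi i).rpow_const (.inr hα.le)).const_mul (κ i)).mul
        (((hqi i).rpow_const (.inl (hLpos i hi).ne')).mul (tendsto_const_nhds.sub (hqi i)))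
    rw [if_pos hi]
    refine hlim.congr' ?_
    filter_upwards [(hpi i).eventually (eventually_gt_nhds hi)] with k hk
    rw [if_pos hk, Set.indicator_of_mem (show i ∈ {i | 0 < n i} from hi)]
  · have hni : n i = 0 := le_antisymm (not_lt.1 hi) (ge_of_tendsto' (hpi i) fun k => hp0 k i)
    have hS : Tendsto (fun k => ∑ i, κ i * p k i ^ α) atTop (𝓝 (∑ i, κ i * n i ^ α)) :=
      tendsto_finsetSum _ fun i _ => ((hpi i).rpow_const (.inr hα.le)).const_mul (κ i)
    have hrate := (tendsto_rateTerm_zero hq hA hAcol hC hα hκ hp0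
      (hS.eventually (eventually_le_nhds (lt_add_one _))) (hni ▸ hpi i)).neg
    rw [if_neg hi]
    refine Tendsto.congr (fun k => ?_) (by simpa only [neg_zero] using hrate)
    rw [Set.indicator_of_notMem (show i ∉ {i | 0 < n i} from hi)]
    split_ifs with hk
    · have hqk := (hq k).pos_of_capacity_pos hA hC hα hκ i hk
      rw [Real.rpow_sub hqk, Real.rpow_one, Real.rpow_neg hqk.le]
      field_simp
      ring
    · simp

lemma eq_of_tendsto_alloc (hq : ∀ k, IsAlloc A C α κ (p k) (q k)) (hy : IsAlloc A C α κ n M)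
    (hA : ∀ j i, 0 ≤ A j i) (hAcol : ∀ i, ∃ j, A j i = 1) (hC : ∀ j, 0 < C j) (hα : 0 < α)
    (hκ : ∀ i, 0 < κ i) (hp0 : ∀ k i, 0 ≤ p k i) (hp : Tendsto p atTop (𝓝 n))
    (hqL : Tendsto q atTop (𝓝 L)) {i : Fin I} (hi : 0 < n i) : L i = M i := by
  have hLpos := fun i => pos_of_tendsto_alloc (i := i) hq hA hAcol hC hα hκ hp0 hp hqL
  have hMpos := hy.pos_of_capacity_pos hA hC hα hκ
  have hqi := tendsto_pi_nhds.1 hqL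
  have hL0 : ∀ i, 0 ≤ L i := fun i => ge_of_tendsto' (hqi i) fun k => (hq k).1.1 i
  have hLC : ∀ j, ∑ i, A j i * L i ≤ C j := fun j =>
    le_of_tendsto' (tendsto_finsetSum _ fun i _ => (hqi i).const_mul (A j i))
      fun k => (hq k).1.2.2 j
  have hML : fairObjectiveDeriv α κ n M L ≤ 0 := by
    rw [← fairObjectiveDeriv_congr (M := {i | 0 < n i}.indicator L)
      fun i hi => Set.indicator_of_mem (show i ∈ {i | 0 < n i} from hi) _]
    exact hy.fairObjectiveDeriv_nonpos hMpos (indicator_mem_feasible hA hL0 hLC fun _ h => h)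
  have hsupp : ∀ᶠ k in atTop, ∀ i, 0 < n i → 0 < p k i := eventually_all.2 fun i => by
    by_cases hi : 0 < n i
    · filter_upwards [(tendsto_pi_nhds.1 hp i).eventually (eventually_gt_nhds hi)] with k hk
      exact fun _ => hk
    · exact .of_forall fun _ h => absurd h hi
  have hLM : fairObjectiveDeriv α κ n L M ≤ 0 := by
    refine le_of_tendsto (tendsto_fairObjectiveDeriv hq hA hAcol hC hα hκ hp0 hp hqL hLpos M) ?_
    filter_upwards [hsupp] with k hk
    exact (hq k).fairObjectiveDeriv_nonpos ((hq k).pos_of_capacity_pos hA hC hα hκ)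
      (indicator_mem_feasible hA hy.1.1 hy.1.2.2 hk)
  exact eq_of_fairObjectiveDeriv_nonpos hα hκ hLpos hMpos hLM hML hi

variable {ν μ : Fin I → ℝ} {Λ : (Fin I → ℝ) → Fin I → ℝ}

lemma tendsto_Kfun (hΛ : ∀ m : Fin I → ℝ, (∀ i, 0 ≤ m i) → IsAlloc A C α κ m (Λ m))
    (hA : ∀ j i, 0 ≤ A j i) (hAcol : ∀ i, ∃ j, A j i = 1) (hC : ∀ j, 0 < C j) (hα : 0 < α)
    (hκ : ∀ i, 0 < κ i) (hν : ∀ i, 0 < ν i) (hμ : ∀ i, 0 < μ i) (hp0 : ∀ k i, 0 ≤ p k i)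
    (hp : Tendsto p atTop (𝓝 n)) (hqL : Tendsto (fun k => Λ (p k)) atTop (𝓝 L)) :
    Tendsto (fun k => Kfun α κ ν μ Λ (p k)) atTop (𝓝 (Kfun α κ ν μ Λ n)) := by
  have hpi := tendsto_pi_nhds.1 hp
  have hn : ∀ i, 0 ≤ n i := fun i => ge_of_tendsto' (hpi i) fun k => hp0 k i
  have hq : ∀ k, IsAlloc A C α κ (p k) (Λ (p k)) := fun k => hΛ (p k) (hp0 k)
  have hpow : ∀ i, Tendsto (fun k => (μ i * p k i / ν i) ^ α) atTop
      (𝓝 ((μ i * n i / ν i) ^ α)) := fun i =>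
    (((hpi i).const_mul (μ i)).div_const (ν i)).rpow_const (.inr hα.le)
  refine tendsto_finsetSum _ fun i _ => ?_
  by_cases hi : 0 < n i
  · rw [if_pos hi, ← eq_of_tendsto_alloc hq (hΛ n hn) hA hAcol hC hα hκ hp0 hp hqL hi]
    refine (((hpow i).const_mul (κ i)).mul
      (tendsto_const_nhds.sub (tendsto_pi_nhds.1 hqL i))).congr' ?_
    filter_upwards [(hpi i).eventually (eventually_gt_nhds hi)] with k hk
    rw [if_pos hk]
  · have hni : n i = 0 := le_antisymm (not_lt.1 hi) (hn i)
    rw [if_neg hi]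
    have hlim := ((hpow i).const_mul (κ i)).mul_const (ν i / μ i + ∑ j, C j)
    rw [hni, mul_zero, zero_div, Real.zero_rpow hα.ne', mul_zero, zero_mul] at hlim
    refine squeeze_zero_norm (fun k => ?_) hlim
    have hB := le_sum_capacity_of_mem_feasible hA hAcol (fun j => (hC j).le) (hq k).1 i
    have := (hq k).1.1 i; have := hκ i; have := div_pos (hν i) (hμ i)
    have : 0 ≤ (μ i * p k i / ν i) ^ α :=
      Real.rpow_nonneg (div_nonneg (mul_nonneg (hμ i).le (hp0 k i)) (hν i).le) α
    split_ifs
    · rw [Real.norm_eq_abs, abs_mul, abs_of_nonneg (by positivity)]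
      gcongr
      exact abs_le.2 ⟨by linarith, by linarith⟩
    · simp only [norm_zero]
      have : 0 ≤ ∑ j, C j := Finset.sum_nonneg fun j _ => (hC j).le
      positivity

theorem continuousOn_Kfun (hΛ : ∀ m : Fin I → ℝ, (∀ i, 0 ≤ m i) → IsAlloc A C α κ m (Λ m))
    (hA : ∀ j i, 0 ≤ A j i) (hAcol : ∀ i, ∃ j, A j i = 1) (hC : ∀ j, 0 < C j) (hα : 0 < α)
    (hκ : ∀ i, 0 < κ i) (hν : ∀ i, 0 < ν i) (hμ : ∀ i, 0 < μ i) :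
    ContinuousOn (Kfun α κ ν μ Λ) {n : Fin I → ℝ | ∀ i, 0 ≤ n i} := by
  rw [continuousOn_iff_continuous_domRestrict, continuous_iff_seqContinuous]
  intro x n hx
  have hp : Tendsto (fun k => (x k : Fin I → ℝ)) atTop (𝓝 n) :=
    (continuous_subtype_val.tendsto n).comp hx
  refine tendsto_of_subseq_tendsto fun ns hns => ?_
  have hbox : ∀ k, Λ (x (ns k)) ∈ Icc (0 : Fin I → ℝ) fun _ => ∑ j, C j := fun k =>
    have hq := hΛ _ (x (ns k)).2
    ⟨hq.1.1, le_sum_capacity_of_mem_feasible hA hAcol (fun j => (hC j).le) hq.1⟩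
  obtain ⟨L, -, φ, hφ, hL⟩ := isCompact_Icc.tendsto_subseq hbox
  exact ⟨φ, tendsto_Kfun hΛ hA hAcol hC hα hκ hν hμ (fun k => (x (ns (φ k))).2)
    (hp.comp (hns.comp hφ.tendsto_atTop)) hL⟩

end Continuity

theorem stmt10_general {I J : ℕ}
    (A : Fin J → Fin I → ℝ) (hA01 : ∀ j i, A j i = 0 ∨ A j i = 1)
    (hAcol : ∀ i, ∃ j, A j i = 1)
    (C : Fin J → ℝ) (hC : ∀ j, 0 < C j)
    (α : ℝ) (hα : 0 < α) (κ : Fin I → ℝ) (hκ : ∀ i, 0 < κ i)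
    (ν μ : Fin I → ℝ) (hν : ∀ i, 0 < ν i) (hμ : ∀ i, 0 < μ i)
    (hload : ∀ j, (∑ i, A j i * (ν i / μ i)) ≤ C j)
    (Λ : (Fin I → ℝ) → Fin I → ℝ)
    (hΛ : ∀ n : Fin I → ℝ, (∀ i, 0 ≤ n i) → IsAlloc A C α κ n (Λ n)) :
    ContinuousOn (Kfun α κ ν μ Λ) {n : Fin I → ℝ | ∀ i, 0 ≤ n i} ∧
    ∀ n : Fin I → ℝ, (∀ i, 0 ≤ n i) →
      Kfun α κ ν μ Λ n ≤ 0 ∧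
      ((¬ IsFluidSol A C ν μ Λ fun _ => n) → Kfun α κ ν μ Λ n < 0) := by
  have hA : ∀ j i, 0 ≤ A j i := fun j i => by rcases hA01 j i with h | h <;> simp [h]
  refine ⟨continuousOn_Kfun hΛ hA hAcol hC hα hκ hν hμ, fun n hn =>
    ⟨Kfun_nonpos (hΛ n hn) hA hC hα hκ hν hμ hload, fun hnot => ?_⟩⟩
  obtain ⟨i, hi, hne⟩ : ∃ i, 0 < n i ∧ Λ n i ≠ ν i / μ i := by
    by_contra! hfix
    exact hnot (isFluidSol_const hμ hn hload hfix)
  exact Kfun_neg_of_ne (hΛ n hn) hA hC hα hκ hν hμ hload hi hne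

theorem stmt10 {I J : ℕ} (hI : 0 < I) (hJ : 0 < J)
    (A : Fin J → Fin I → ℝ) (hA01 : ∀ j i, A j i = 0 ∨ A j i = 1)
    (hAcol : ∀ i, ∃ j, A j i = 1) (hArank : LinearIndependent ℝ A)
    (C : Fin J → ℝ) (hC : ∀ j, 0 < C j)
    (α : ℝ) (hα : 0 < α) (κ : Fin I → ℝ) (hκ : ∀ i, 0 < κ i)
    (ν μ : Fin I → ℝ) (hν : ∀ i, 0 < ν i) (hμ : ∀ i, 0 < μ i)
    (hload : ∀ j, (∑ i, A j i * (ν i / μ i)) ≤ C j)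
    (hJs : (Jstar A C ν μ).Nonempty)
    (Λ : (Fin I → ℝ) → Fin I → ℝ)
    (hΛ : ∀ n : Fin I → ℝ, (∀ i, 0 ≤ n i) → IsAlloc A C α κ n (Λ n)) :
    ContinuousOn (Kfun α κ ν μ Λ) {n : Fin I → ℝ | ∀ i, 0 ≤ n i} ∧
    ∀ n : Fin I → ℝ, (∀ i, 0 ≤ n i) →
      Kfun α κ ν μ Λ n ≤ 0 ∧
      ((¬ IsFluidSol A C ν μ Λ fun _ => n) → Kfun α κ ν μ Λ n < 0) :=
  stmt10_general A hA01 hAcol C hC α hα κ hκ ν μ hν hμ hload Λ hΛ
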